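/- arXiv:1810.05356 — 4 statements merged into one kernel-verified Lean document; each statement's English description precedes it below -/
import Mathlib

section
/- Let (X, Σ, μ) be a finite measure space and E a σ-order continuous Banach lattice. Suppose (f_n) is a sequence of Bochner integrable functions X → E such that: (i) for a.e. w, f_n(w) → f(w) in unbounded order (i.e., |f_n(w) − f(w)| ∧ u order-converges to 0 for every u ∈ E₊); (ii) the set {f_n(w) : n} ∪ {f(w)} is suitably almost order bounded in B(X,E,μ), i.e., for every ε > 0 there is g ∈ B(X,E,μ)₊ with each f_n in [−g,g] + ε·ball; (iii) sup_n ∫ ‖f_n(w)‖ dμ < ∞. Then f is Bochner integrable and ∫ f_n dμ → ∫ f dμ in norm of E. -/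
open MeasureTheory Filter Topology

/-- Order convergence of a sequence: there is a sequence `g_k ↓ 0` dominating the tails. -/
def OrderConvSeq {G : Type*} [Lattice G] [AddCommGroup G] (x : ℕ → G) (a : G) : Prop :=
  ∃ g : ℕ → G, Antitone g ∧ IsGLB (Set.range g) 0 ∧
    ∀ k, ∃ N, ∀ n ≥ N, |x n - a| ≤ g k

/-- Unbounded order convergence: `|x_n − a| ⊓ u` order-converges to `0` for every `u ≥ 0`. -/
def UoConvSeq {G : Type*} [Lattice G] [AddCommGroup G] (x : ℕ → G) (a : G) : Prop :=
  ∀ u : G, 0 ≤ u → OrderConvSeq (fun n => |x n - a| ⊓ u) 0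

/-- σ-order continuity of the norm. -/
def SigmaOrderCont (G : Type*) [NormedAddCommGroup G] [Lattice G] [HasSolidNorm G]
    [IsOrderedAddMonoid G] : Prop :=
  ∀ x : ℕ → G, Antitone x → IsGLB (Set.range x) 0 →
    Tendsto (fun n => ‖x n‖) atTop (𝓝 0)

/-!
Almost order boundedness reduces the L¹-Cauchy property to truncations: if `‖F n - h n‖ ≤ ε`
with `|h n| ≤ u`, then `‖F m - F n‖ ≤ ‖|F m - F n| ⊓ (u + u)‖ + 4ε`. By σ-order continuity,
uo-convergence of `f n w` makes `‖|f m w - f n w| ⊓ v‖` tend to `0` pointwise, and dominated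
convergence (by `‖v‖`) carries this to the L¹ norm. Hence `F n` has an L¹ limit `L`; a subsequence
converges to `L` almost everywhere, and a uo-limit agrees with a norm limit, so `g = L` a.e.
Continuity of the Bochner integral on L¹ gives the convergence of the integrals.
-/

section LatticeOrderedGroup

variable {G : Type*} [AddCommGroup G] [Lattice G] [IsOrderedAddMonoid G]

theorem add_inf_le_inf_add_inf {a b c : G} (ha : 0 ≤ a) (hb : 0 ≤ b) (hc : 0 ≤ c) :
    (a + b) ⊓ c ≤ a ⊓ c + b ⊓ c :=
  calc (a + b) ⊓ c
      ≤ (a ⊓ c + b) ⊓ c := by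
        refine le_inf ?_ inf_le_right
        rw [inf_add]
        exact inf_le_inf_left _ (le_add_of_nonneg_right hb)
    _ ≤ a ⊓ c + b ⊓ c := by
        rw [add_inf]
        exact inf_le_inf_left _ (le_add_of_nonneg_left (le_inf ha hc))

end LatticeOrderedGroup

section NormedLattice

variable {G : Type*} [NormedAddCommGroup G] [Lattice G] [HasSolidNorm G] [IsOrderedAddMonoid G]

theorem norm_le_norm_of_nonneg_of_le {a b : G} (ha : 0 ≤ a) (hab : a ≤ b) : ‖a‖ ≤ ‖b‖ :=
  norm_le_norm_of_abs_le_abs <| by rwa [abs_of_nonneg ha, abs_of_nonneg (ha.trans hab)]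

theorem norm_le_norm_abs_inf_add_norm_sub {x y c : G} (hy : |y| ≤ c) :
    ‖y‖ ≤ ‖|x| ⊓ c‖ + ‖y - x‖ :=
  calc ‖y‖ = ‖|y| ⊓ c‖ := by rw [inf_eq_left.2 hy, norm_abs_eq_norm]
    _ ≤ ‖|x| ⊓ c‖ + ‖|y| ⊓ c - |x| ⊓ c‖ := norm_le_norm_add_norm_sub' _ _
    _ ≤ ‖|x| ⊓ c‖ + ‖y - x‖ := by
        gcongr
        exact (norm_inf_sub_inf_le_norm _ _ _).trans (norm_abs_sub_abs _ _)

theorem norm_abs_sub_inf_le (x y a : G) {u : G} (hu : 0 ≤ u) :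
    ‖|x - y| ⊓ u‖ ≤ ‖|x - a| ⊓ u‖ + ‖|y - a| ⊓ u‖ := by
  refine (norm_le_norm_of_nonneg_of_le (le_inf (abs_nonneg _) hu) ?_).trans (norm_add_le _ _)
  calc |x - y| ⊓ u ≤ (|x - a| + |y - a|) ⊓ u := by
        refine inf_le_inf_right u ?_
        rw [show x - y = (x - a) + (a - y) by abel, abs_sub_comm y a]
        exact abs_add_le _ _
    _ ≤ |x - a| ⊓ u + |y - a| ⊓ u := add_inf_le_inf_add_inf (abs_nonneg _) (abs_nonneg _) hu

theorem norm_sub_le_of_abs_le {x y h h' u : G} (hh : |h| ≤ u) (hh' : |h'| ≤ u) :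
    ‖x - y‖ ≤ ‖|x - y| ⊓ (u + u)‖ + 2 * (‖x - h‖ + ‖y - h'‖) := by
  have herr : ‖(h - h') - (x - y)‖ ≤ ‖x - h‖ + ‖y - h'‖ := by
    rw [show (h - h') - (x - y) = (y - h') - (x - h) by abel, add_comm]
    exact norm_sub_le _ _
  have hbound : |h - h'| ≤ u + u := by
    rw [sub_eq_add_neg]
    exact (abs_add_le _ _).trans (add_le_add hh (by rwa [abs_neg]))
  calc ‖x - y‖ ≤ ‖h - h'‖ + ‖(x - y) - (h - h')‖ := norm_le_norm_add_norm_sub' _ _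
    _ ≤ ‖|x - y| ⊓ (u + u)‖ + ‖(h - h') - (x - y)‖ + ‖(x - y) - (h - h')‖ := by
        gcongr
        exact norm_le_norm_abs_inf_add_norm_sub hbound
    _ ≤ ‖|x - y| ⊓ (u + u)‖ + 2 * (‖x - h‖ + ‖y - h'‖) := by
        rw [norm_sub_rev (x - y)]
        linarith

theorem cauchySeq_of_almost_order_bounded {F : ℕ → G}
    (haob : ∀ ε > (0 : ℝ), ∃ u : G, 0 ≤ u ∧ ∀ n, ∃ h : G, |h| ≤ u ∧ ‖F n - h‖ ≤ ε)
    (htrunc : ∀ u : G, 0 ≤ u →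
      Tendsto (fun p : ℕ × ℕ => ‖|F p.1 - F p.2| ⊓ u‖) (atTop ×ˢ atTop) (𝓝 0)) :
    CauchySeq F := by
  refine Metric.cauchySeq_iff.2 fun ε hε => ?_
  obtain ⟨u, hu, happrox⟩ := haob (ε / 5) (by positivity)
  choose h hh_le hh_near using happrox
  have hev := (htrunc (u + u) (add_nonneg hu hu)).eventually (gt_mem_nhds (by positivity : 0 < ε / 5))
  rw [prod_atTop_atTop_eq] at hev
  obtain ⟨N, hN⟩ := eventually_atTop_prod_self'.1 hev
  refine ⟨N, fun m hm n hn => ?_⟩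
  have hmn : ‖|F m - F n| ⊓ (u + u)‖ < ε / 5 := hN m hm n hn
  rw [dist_eq_norm]
  calc ‖F m - F n‖ ≤ ‖|F m - F n| ⊓ (u + u)‖ + 2 * (‖F m - h m‖ + ‖F n - h n‖) :=
        norm_sub_le_of_abs_le (hh_le m) (hh_le n)
    _ < ε := by linarith [hh_near m, hh_near n]

theorem eq_of_tendsto_norm_abs_sub_inf {ι : Type*} {l : Filter ι} [l.NeBot] {x : ι → G}
    {a b : G} (huo : Tendsto (fun i => ‖|x i - a| ⊓ |a - b|‖) l (𝓝 0))
    (hx : Tendsto x l (𝓝 b)) : a = b := by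
  have hbound : ∀ i, ‖a - b‖ ≤ ‖|x i - a| ⊓ |a - b|‖ + ‖x i - b‖ := fun i => by
    simpa [abs_sub_comm] using
      norm_le_norm_abs_inf_add_norm_sub (x := a - x i) (y := a - b) le_rfl
  have hlim : Tendsto (fun i => ‖|x i - a| ⊓ |a - b|‖ + ‖x i - b‖) l (𝓝 0) := by
    simpa using huo.add (tendsto_iff_norm_sub_tendsto_zero.1 hx)
  exact sub_eq_zero.1 (norm_le_zero_iff.1 (ge_of_tendsto' hlim hbound))

theorem OrderConvSeq.tendsto_norm_sub (hG : SigmaOrderCont G) {x : ℕ → G} {a : G}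
    (h : OrderConvSeq x a) : Tendsto (fun n => ‖x n - a‖) atTop (𝓝 0) := by
  obtain ⟨y, hy_anti, hy_glb, hy_tail⟩ := h
  refine tendsto_order.2 ⟨fun b hb => .of_forall fun n => hb.trans_le (norm_nonneg _),
    fun ε hε => ?_⟩
  obtain ⟨k, hk⟩ := ((hG y hy_anti hy_glb).eventually (gt_mem_nhds hε)).exists
  obtain ⟨N, hN⟩ := hy_tail k
  filter_upwards [eventually_ge_atTop N] with n hn
  calc ‖x n - a‖ = ‖|x n - a|‖ := (norm_abs_eq_norm _).symm
    _ ≤ ‖y k‖ := norm_le_norm_of_nonneg_of_le (abs_nonneg _) (hN n hn)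
    _ < ε := hk

theorem UoConvSeq.tendsto_norm_abs_sub_inf (hG : SigmaOrderCont G) {x : ℕ → G} {a u : G}
    (h : UoConvSeq x a) (hu : 0 ≤ u) : Tendsto (fun n => ‖|x n - a| ⊓ u‖) atTop (𝓝 0) := by
  simpa using (h u hu).tendsto_norm_sub hG

theorem UoConvSeq.tendsto_norm_abs_sub_inf_prod (hG : SigmaOrderCont G) {x : ℕ → G} {a u : G}
    (h : UoConvSeq x a) (hu : 0 ≤ u) :
    Tendsto (fun p : ℕ × ℕ => ‖|x p.1 - x p.2| ⊓ u‖) (atTop ×ˢ atTop) (𝓝 0) := by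
  have hlim := h.tendsto_norm_abs_sub_inf hG hu
  refine squeeze_zero (fun _ => norm_nonneg _) (fun p => norm_abs_sub_inf_le _ _ a hu) ?_
  simpa using (hlim.comp tendsto_fst).add (hlim.comp tendsto_snd)

end NormedLattice

namespace MeasureTheory

variable {X : Type*} [MeasurableSpace X] {μ : Measure X}
  {E : Type*} [NormedAddCommGroup E] [Lattice E] [HasSolidNorm E] [IsOrderedAddMonoid E]

theorem L1.norm_abs_inf_eq_integral (F u : Lp E 1 μ) :
    ‖|F| ⊓ u‖ = ∫ w, ‖|F w| ⊓ u w‖ ∂μ := by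
  rw [L1.norm_eq_integral_norm]
  refine integral_congr_ae ?_
  filter_upwards [Lp.coeFn_inf |F| u, Lp.coeFn_abs F] with w hinf habs
  rw [hinf, Pi.inf_apply, habs]

theorem L1.tendsto_norm_abs_inf_of_ae {ι : Type*} {l : Filter ι} [l.IsCountablyGenerated]
    {F : ι → Lp E 1 μ} {u : Lp E 1 μ} (hu : 0 ≤ u)
    (hF : ∀ᵐ w ∂μ, Tendsto (fun i => ‖|F i w| ⊓ u w‖) l (𝓝 0)) :
    Tendsto (fun i => ‖|F i| ⊓ u‖) l (𝓝 0) := by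
  simp_rw [L1.norm_abs_inf_eq_integral]
  have hDCT := tendsto_integral_filter_of_dominated_convergence (fun w => ‖u w‖)
    (.of_forall fun i => ?_) (.of_forall fun i => ?_) (L1.integrable_coeFn u).norm hF
  · simpa using hDCT
  · fun_prop
  · filter_upwards [(Lp.coeFn_nonneg u).2 hu] with w hw
    rw [norm_norm]
    exact norm_le_norm_of_nonneg_of_le (le_inf (abs_nonneg _) hw) inf_le_right

theorem L1.tendsto_norm_abs_sub_inf_prod_of_uo (hE : SigmaOrderCont E) {F : ℕ → Lp E 1 μ}
    {g : X → E} (huo : ∀ᵐ w ∂μ, UoConvSeq (fun n => F n w) (g w)) {u : Lp E 1 μ} (hu : 0 ≤ u) :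
    Tendsto (fun p : ℕ × ℕ => ‖|F p.1 - F p.2| ⊓ u‖) (atTop ×ˢ atTop) (𝓝 0) := by
  refine L1.tendsto_norm_abs_inf_of_ae hu ?_
  filter_upwards [huo, (Lp.coeFn_nonneg u).2 hu,
    ae_all_iff.2 fun p : ℕ × ℕ => Lp.coeFn_sub (F p.1) (F p.2)] with w huo_w hu_w hsub
  simp_rw [hsub, Pi.sub_apply]
  exact huo_w.tendsto_norm_abs_sub_inf_prod hE hu_w

theorem Lp.ae_eq_of_tendsto_of_uo {p : ENNReal} [Fact (1 ≤ p)] (hE : SigmaOrderCont E)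
    {F : ℕ → Lp E p μ} {L : Lp E p μ} (hFL : Tendsto F atTop (𝓝 L)) {g : X → E}
    (huo : ∀ᵐ w ∂μ, UoConvSeq (fun n => F n w) (g w)) : g =ᵐ[μ] L := by
  obtain ⟨ns, hns, hae⟩ := (tendstoInMeasure_of_tendsto_Lp hFL).exists_seq_tendsto_ae
  filter_upwards [huo, hae] with w huo_w hae_w
  exact eq_of_tendsto_norm_abs_sub_inf
    ((huo_w.tendsto_norm_abs_sub_inf hE (abs_nonneg _)).comp hns.tendsto_atTop) hae_w

end MeasureTheory

theorem stmt_4_general {X : Type*} [MeasurableSpace X] (μ : Measure X)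
    {E : Type*} [NormedAddCommGroup E] [Lattice E] [HasSolidNorm E] [IsOrderedAddMonoid E]
    [NormedSpace ℝ E] [CompleteSpace E]
    (hE : SigmaOrderCont E)
    (f : ℕ → X → E) (g : X → E) (hf : ∀ n, Integrable (f n) μ)
    (huo : ∀ᵐ w ∂μ, UoConvSeq (fun n => f n w) (g w))
    (haob : ∀ ε > (0:ℝ), ∃ u : Lp E 1 μ, 0 ≤ u ∧
      ∀ n, ∃ h : Lp E 1 μ, |h| ≤ u ∧ ‖(memLp_one_iff_integrable.mpr (hf n)).toLp (f n) - h‖ ≤ ε) :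
    Integrable g μ ∧
    Tendsto (fun n => ∫ w, f n w ∂μ) atTop (𝓝 (∫ w, g w ∂μ)) := by
  set F : ℕ → Lp E 1 μ := fun n => (memLp_one_iff_integrable.mpr (hf n)).toLp (f n)
  have hFf : ∀ n, F n =ᵐ[μ] f n := fun n => MemLp.coeFn_toLp _
  have huoF : ∀ᵐ w ∂μ, UoConvSeq (fun n => F n w) (g w) := by
    filter_upwards [huo, ae_all_iff.2 hFf] with w huo_w hFf_w
    simpa only [hFf_w] using huo_w
  obtain ⟨L, hFL⟩ := cauchySeq_tendsto_of_complete <| cauchySeq_of_almost_order_bounded haob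
    fun u hu => L1.tendsto_norm_abs_sub_inf_prod_of_uo hE huoF hu
  have hgL : g =ᵐ[μ] L := Lp.ae_eq_of_tendsto_of_uo hE hFL huoF
  refine ⟨(L1.integrable_coeFn L).congr hgL.symm, ?_⟩
  rw [integral_congr_ae hgL]
  exact ((continuous_integral.tendsto L).comp hFL).congr fun n => integral_congr_ae (hFf n)

/-- uo-convergent, almost order bounded (in `B(X,E,μ)`), norm bounded sequences
of Bochner integrable functions with values in a σ-order continuous Banach lattice have a
Bochner integrable limit, and the Bochner integrals converge in norm. -/
theorem stmt_4 {X : Type*} [MeasurableSpace X] (μ : Measure X) [IsFiniteMeasure μ]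
    {E : Type*} [NormedAddCommGroup E] [Lattice E] [HasSolidNorm E] [IsOrderedAddMonoid E]
    [NormedSpace ℝ E] [CompleteSpace E]
    (hE : SigmaOrderCont E)
    (f : ℕ → X → E) (g : X → E) (hf : ∀ n, Integrable (f n) μ)
    (huo : ∀ᵐ w ∂μ, UoConvSeq (fun n => f n w) (g w))
    (haob : ∀ ε > (0:ℝ), ∃ u : Lp E 1 μ, 0 ≤ u ∧
      ∀ n, ∃ h : Lp E 1 μ, |h| ≤ u ∧ ‖(memLp_one_iff_integrable.mpr (hf n)).toLp (f n) - h‖ ≤ ε)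
    (hbd : ∃ M : ℝ, ∀ n, ∫ w, ‖f n w‖ ∂μ ≤ M) :
    Integrable g μ ∧
    Tendsto (fun n => ∫ w, f n w ∂μ) atTop (𝓝 (∫ w, g w ∂μ)) :=
  stmt_4_general μ hE f g hf huo haob
end

section
/- Let X = [0,1] with Lebesgue measure, E = L¹[0,1], and f_n : X → E the constant function f_n(t) = δ_n where δ_n = n·𝟙_{[0,1/n]}. Then δ_n uo-converges to 0 in E (hence f_n(t) → 0 in unbounded order for all t), ‖δ_n‖ = 1, but ∫_X f_n dμ = δ_n does not converge to 0 in norm; indeed ‖∫_X f_n dμ‖ = 1 for all n. -/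
open MeasureTheory Filter Topology

noncomputable section

/-- Lebesgue measure on `[0,1]`. -/
def lebOn01 : Measure ℝ := volume.restrict (Set.Icc (0:ℝ) 1)

instance : IsFiniteMeasure lebOn01 := by
  unfold lebOn01; infer_instance

/-- `δ_n = n · 𝟙_{[0,1/n]}` (here indexed so that `delta n` is `δ_{n+1}`), as an element of
`E = L¹[0,1]`. -/
def delta (n : ℕ) : Lp ℝ 1 lebOn01 :=
  indicatorConstLp 1 (measurableSet_Icc : MeasurableSet (Set.Icc (0:ℝ) (1/(n+1))))
    (measure_ne_top _ _) ((n : ℝ) + 1)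

/-!
If `x n` vanishes off `s n`, where the sets `s n` decrease to a null set, then for every `u ≥ 0`
the truncations `u · 𝟙_{s k}` decrease to `0` in `Lp` and dominate `|x n| ⊓ u` for `n ≥ k`, so
`x n` tends to `0` in unbounded order however large its norm. For `δ_n` take
`s n = [0, 1/(n+1)]`. On the other hand `‖δ_n‖ = 1`, and the Bochner integral of a constant over the
probability measure `lebOn01` is that constant.
-/

open scoped ENNReal

namespace MeasureTheory.Lp

variable {α : Type*} [MeasurableSpace α] {μ : Measure α} {p : ℝ≥0∞}

def indicator {E : Type*} [NormedAddCommGroup E] {s : Set α} (hs : MeasurableSet s)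
    (u : Lp E p μ) : Lp E p μ :=
  ((Lp.memLp u).indicator hs).toLp _

theorem coeFn_indicator {E : Type*} [NormedAddCommGroup E] {s : Set α} (hs : MeasurableSet s)
    (u : Lp E p μ) : ⇑(indicator hs u) =ᵐ[μ] s.indicator u :=
  MemLp.coeFn_toLp _

variable {u : Lp ℝ p μ}

theorem indicator_le_indicator_of_subset (hu : 0 ≤ u) {s t : Set α} (hs : MeasurableSet s)
    (ht : MeasurableSet t) (hst : s ⊆ t) : indicator hs u ≤ indicator ht u := by
  rw [← coeFn_le]
  filter_upwards [coeFn_indicator hs u, coeFn_indicator ht u, (coeFn_nonneg u).mpr hu]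
    with a has hat hua
  rw [has, hat]
  by_cases ha : a ∈ s
  · rw [Set.indicator_of_mem ha, Set.indicator_of_mem (hst ha)]
  · rw [Set.indicator_of_notMem ha]
    exact Set.indicator_nonneg (fun _ _ => hua) a

theorem isGLB_range_indicator (hu : 0 ≤ u) {s : ℕ → Set α} (hs : ∀ k, MeasurableSet (s k))
    (hnull : μ (⋂ k, s k) = 0) : IsGLB (Set.range fun k => indicator (hs k) u) 0 := by
  have hu' : 0 ≤ᵐ[μ] u := (coeFn_nonneg u).mpr hu
  refine ⟨?_, fun w hw => ?_⟩
  · rintro _ ⟨k, rfl⟩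
    rw [← coeFn_nonneg]
    filter_upwards [coeFn_indicator (hs k) u, hu'] with a ha hua
    rw [ha]
    exact Set.indicator_nonneg (fun _ _ => hua) a
  · have hw_le : ∀ᵐ a ∂μ, ∀ k, w a ≤ (s k).indicator u a := by
      rw [ae_all_iff]
      intro k
      filter_upwards [(coeFn_le _ _).mpr (hw ⟨k, rfl⟩), coeFn_indicator (hs k) u]
        with a hwa ha
      rwa [← ha]
    rw [← coeFn_le]
    filter_upwards [hw_le, coeFn_zero ℝ p μ, measure_eq_zero_iff_ae_notMem.mp hnull]
      with a hwa h0 ha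
    obtain ⟨k, hk⟩ : ∃ k, a ∉ s k := by simpa using ha
    rw [h0]
    simpa [Set.indicator_of_notMem hk] using hwa k

theorem abs_inf_le_indicator {x : Lp ℝ p μ} {s : Set α} (hs : MeasurableSet s)
    (hx : ∀ᵐ a ∂μ, a ∉ s → x a = 0) : |x| ⊓ u ≤ indicator hs u := by
  rw [← coeFn_le]
  filter_upwards [coeFn_inf |x| u, coeFn_abs x, coeFn_indicator hs u, hx]
    with a hinf habs hind hxa
  rw [hinf, Pi.inf_apply, habs, hind]
  by_cases ha : a ∈ s
  · rw [Set.indicator_of_mem ha]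
    exact inf_le_right
  · simp [Set.indicator_of_notMem ha, hxa ha]

theorem uoConvSeq_zero_of_ae_eq_zero_off {x : ℕ → Lp ℝ p μ} {s : ℕ → Set α}
    (hs : ∀ k, MeasurableSet (s k)) (hanti : Antitone s) (hnull : μ (⋂ k, s k) = 0) (hx : ∀ n, ∀ᵐ a ∂μ, a ∉ s n → x n a = 0) :
    UoConvSeq x 0 := by
  intro u hu
  have hmono : Antitone fun k => indicator (hs k) u := fun k l hkl =>
    indicator_le_indicator_of_subset hu (hs l) (hs k) (hanti hkl)
  refine ⟨_, hmono, isGLB_range_indicator hu hs hnull, fun k => ⟨k, fun n hn => ?_⟩⟩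
  change |(|x n - 0| ⊓ u) - 0| ≤ _
  rw [sub_zero, sub_zero, abs_of_nonneg (le_inf (abs_nonneg _) hu)]
  exact (abs_inf_le_indicator (hs n) (hx n)).trans (hmono hn)

end MeasureTheory.Lp

instance : IsProbabilityMeasure lebOn01 :=
  ⟨by simp [lebOn01]⟩

theorem lebOn01_Icc {a : ℝ} (ha : a ≤ 1) :
    lebOn01 (Set.Icc 0 a) = ENNReal.ofReal a := by
  rw [lebOn01, Measure.restrict_apply measurableSet_Icc,
    Set.inter_eq_self_of_subset_left (Set.Icc_subset_Icc_right ha), Real.volume_Icc, sub_zero]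

theorem lebOn01_iInter_Icc : lebOn01 (⋂ k : ℕ, Set.Icc 0 (1 / (k + 1))) = 0 := by
  have : NullSingletonClass lebOn01 := by unfold lebOn01; infer_instance
  refine measure_mono_null (fun t ht => ?_) (measure_singleton (μ := lebOn01) 0)
  simp only [Set.mem_iInter, Set.mem_Icc] at ht
  refine le_antisymm (le_of_not_gt fun hpos => ?_) (ht 0).1
  obtain ⟨k, hk⟩ := exists_nat_one_div_lt hpos
  exact (ht k).2.not_gt hk

theorem norm_delta (n : ℕ) : ‖delta n‖ = 1 := by
  have h0 : (0 : ℝ) ≤ 1 / (n + 1) := by positivity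
  have h1 : (1 : ℝ) / (n + 1) ≤ 1 := by simpa using Nat.one_div_le_one_div (α := ℝ) n.zero_le
  rw [delta, norm_indicatorConstLp one_ne_zero ENNReal.one_ne_top, measureReal_def,
    lebOn01_Icc h1, ENNReal.toReal_ofReal h0]
  simp [abs_of_nonneg (by positivity : (0 : ℝ) ≤ n + 1)]
  field_simp

theorem uoConvSeq_delta : UoConvSeq delta 0 :=
  Lp.uoConvSeq_zero_of_ae_eq_zero_off (fun _ => measurableSet_Icc)
    (fun _ _ h => Set.Icc_subset_Icc_right (Nat.one_div_le_one_div h)) lebOn01_iInter_Icc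
    (fun _ => indicatorConstLp_coeFn_notMem)

theorem integral_delta (n : ℕ) : ∫ _t : ℝ, delta n ∂lebOn01 = delta n := by
  simp

/-- `δ_n` uo-converges to `0` in `L¹[0,1]` (hence the constant functions
`f_n(t) = δ_n` converge to `0` in unbounded order pointwise), `‖δ_n‖ = 1`, but the Bochner
integrals `∫_X f_n dμ` all have norm `1` and do not converge to `0`. -/
theorem stmt_6 :
    UoConvSeq delta 0 ∧
    (∀ n, ‖delta n‖ = 1) ∧
    (∀ n, ∫ _t : ℝ, delta n ∂lebOn01 = delta n) ∧
    (∀ n, ‖∫ _t : ℝ, delta n ∂lebOn01‖ = 1) ∧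
    ¬ Tendsto (fun n => ∫ _t : ℝ, delta n ∂lebOn01) atTop (𝓝 0) := by
  have norm_integral : ∀ n, ‖∫ _t : ℝ, delta n ∂lebOn01‖ = 1 := fun n => by
    rw [integral_delta, norm_delta]
  refine ⟨uoConvSeq_delta, norm_delta, integral_delta, norm_integral, fun h => ?_⟩
  have h_norm := h.norm
  simp only [norm_integral, norm_zero] at h_norm
  exact one_ne_zero (tendsto_nhds_unique tendsto_const_nhds h_norm)
end
end

section
/- Let (X, Σ, μ) be a finite measure space and E a KB-space. Then B(X, E, μ) is a KB-space: every increasing, norm bounded sequence of positive Bochner integrable functions converges in the norm ‖f‖ = ∫ ‖f(w)‖ dμ. -/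
/-!
For an increasing positive sequence `fₙ` in `L¹(μ, E)` the pointwise norms `‖fₙ w‖` increase,
so by monotone convergence their supremum has integral at most the `L¹` bound and is finite
almost everywhere. The KB property of `E` then yields an a.e. pointwise limit `L`. As
`0 ≤ fₙ ≤ L`, the norms `‖fₙ‖` are dominated by `‖L‖`, which is integrable by Fatou's lemma,
and dominated convergence gives `fₙ → L` in `L¹`.
-/

open MeasureTheory Filter Topology

/-- A Banach lattice is a KB-space if every increasing norm bounded sequence of positive
elements is norm convergent. -/
def KBSpace (G : Type*) [NormedAddCommGroup G] [Lattice G] [HasSolidNorm G]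
    [IsOrderedAddMonoid G] : Prop :=
  ∀ x : ℕ → G, Monotone x → (∀ n, 0 ≤ x n) → (∃ M : ℝ, ∀ n, ‖x n‖ ≤ M) →
    ∃ a : G, Tendsto x atTop (𝓝 a)

open scoped ENNReal

theorem norm_le_norm_of_nonneg_of_le_s8 {E : Type*} [NormedAddCommGroup E] [Lattice E]
    [HasSolidNorm E] [IsOrderedAddMonoid E] {a b : E} (ha : 0 ≤ a) (hab : a ≤ b) :
    ‖a‖ ≤ ‖b‖ :=
  norm_le_norm_of_abs_le_abs <| by rwa [abs_of_nonneg ha, abs_of_nonneg (ha.trans hab)]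

section

variable {X : Type*} [MeasurableSpace X] {μ : Measure X}

theorem ae_iSup_lt_top_of_lintegral_le {f : ℕ → X → ℝ≥0∞} (hf : ∀ n, AEMeasurable (f n) μ)
    (hmono : ∀ᵐ w ∂μ, Monotone fun n => f n w) {C : ℝ≥0∞} (hC : C ≠ ∞)
    (hbdd : ∀ n, ∫⁻ w, f n w ∂μ ≤ C) : ∀ᵐ w ∂μ, ⨆ n, f n w < ∞ := by
  refine ae_lt_top' (AEMeasurable.iSup hf) ?_
  rw [lintegral_iSup' hf hmono]
  exact ((iSup_le hbdd).trans_lt hC.lt_top).ne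

namespace MeasureTheory.Lp

theorem ae_monotone_of_monotone {E : Type*} [NormedAddCommGroup E] [PartialOrder E]
    {p : ℝ≥0∞} {f : ℕ → Lp E p μ} (hf : Monotone f) : ∀ᵐ w ∂μ, Monotone fun n => f n w :=
  (ae_all_iff.2 fun n => (coeFn_le _ _).2 (hf n.le_succ)).mono fun _ => monotone_nat_of_le_succ

theorem ae_nonneg_of_nonneg {E : Type*} [NormedAddCommGroup E] [PartialOrder E]
    {p : ℝ≥0∞} {f : ℕ → Lp E p μ} (hf : ∀ n, 0 ≤ f n) : ∀ᵐ w ∂μ, ∀ n, 0 ≤ f n w :=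
  ae_all_iff.2 fun n => (coeFn_nonneg _).2 (hf n)

theorem tendsto_of_ae_tendsto_of_dominated {E : Type*} [NormedAddCommGroup E]
    {f : ℕ → Lp E 1 μ} {g : X → E} (hg : MemLp g 1 μ) {bound : X → ℝ}
    (hbound : HasFiniteIntegral bound μ) (hf_le : ∀ n, ∀ᵐ w ∂μ, ‖f n w‖ ≤ bound w)
    (hlim : ∀ᵐ w ∂μ, Tendsto (fun n => f n w) atTop (𝓝 (g w))) :
    Tendsto f atTop (𝓝 (hg.toLp g)) := by
  refine tendsto_Lp_of_tendsto_eLpNorm g hg ?_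
  simpa only [eLpNorm_one_eq_lintegral_enorm, Pi.sub_apply, ofReal_norm] using
    tendsto_lintegral_norm_of_dominated_convergence (fun n => Lp.aestronglyMeasurable (f n))
      hbound hf_le hlim

end MeasureTheory.Lp

variable {E : Type*} [NormedAddCommGroup E] [Lattice E] [HasSolidNorm E] [IsOrderedAddMonoid E]

theorem KBSpace.exists_ae_tendsto (hE : KBSpace E) {f : ℕ → X → E}
    (hf : ∀ n, AEStronglyMeasurable (f n) μ) (hmono : ∀ᵐ w ∂μ, Monotone fun n => f n w)
    (hnonneg : ∀ᵐ w ∂μ, ∀ n, 0 ≤ f n w) {C : ℝ≥0∞} (hC : C ≠ ∞)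
    (hbdd : ∀ n, eLpNorm (f n) 1 μ ≤ C) :
    ∃ L : X → E, ∀ᵐ w ∂μ, Tendsto (fun n => f n w) atTop (𝓝 (L w)) := by
  have hnorm_mono : ∀ᵐ w ∂μ, Monotone fun n => ‖f n w‖ₑ := by
    filter_upwards [hmono, hnonneg] with w hw hw0 m n hmn
    simpa only [enorm_le_iff_norm_le] using norm_le_norm_of_nonneg_of_le_s8 (hw0 m) (hw hmn)
  have hsup := ae_iSup_lt_top_of_lintegral_le (fun n => (hf n).enorm) hnorm_mono hC
    fun n => (eLpNorm_one_eq_lintegral_enorm (f := f n)).symm.trans_le (hbdd n)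
  have hconv : ∀ᵐ w ∂μ, ∃ a, Tendsto (fun n => f n w) atTop (𝓝 a) := by
    filter_upwards [hmono, hnonneg, hsup] with w hw hw0 hwsup
    refine hE _ hw hw0 ⟨(⨆ n, ‖f n w‖ₑ).toReal, fun n => ?_⟩
    rw [← toReal_enorm]
    exact ENNReal.toReal_mono hwsup.ne (le_iSup (fun n => ‖f n w‖ₑ) n)
  choose! L hL using fun w (h : ∃ a, Tendsto (fun n => f n w) atTop (𝓝 a)) => h
  exact ⟨L, hconv.mono hL⟩

end

theorem stmt_8_general {X : Type*} [MeasurableSpace X] (μ : Measure X)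
    {E : Type*} [NormedAddCommGroup E] [Lattice E] [HasSolidNorm E] [IsOrderedAddMonoid E]
    (hE : KBSpace E) : KBSpace (Lp E 1 μ) := by
  rintro f hmono hnonneg ⟨M, hM⟩
  have hf_mono := Lp.ae_monotone_of_monotone hmono
  have hf_nonneg := Lp.ae_nonneg_of_nonneg hnonneg
  have hf_meas n := Lp.aestronglyMeasurable (f n)
  have hbdd n : eLpNorm (f n) 1 μ ≤ ENNReal.ofReal M := by
    rw [← ENNReal.ofReal_toReal (Lp.eLpNorm_ne_top (f n)), ← Lp.norm_def]
    exact ENNReal.ofReal_le_ofReal (hM n)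
  obtain ⟨L, hL⟩ := hE.exists_ae_tendsto hf_meas hf_mono hf_nonneg ENNReal.ofReal_ne_top hbdd
  have hL_mem : MemLp L 1 μ :=
    ⟨aestronglyMeasurable_of_tendsto_ae atTop hf_meas hL,
      (Lp.eLpNorm_le_of_ae_tendsto (Eventually.of_forall hbdd) hf_meas hL).trans_lt
        ENNReal.ofReal_lt_top⟩
  have hf_le n : ∀ᵐ w ∂μ, ‖f n w‖ ≤ ‖L w‖ := by
    filter_upwards [hf_mono, hf_nonneg, hL] with w hw hw0 hwL
    exact norm_le_norm_of_nonneg_of_le_s8 (hw0 n) (hw.ge_of_tendsto hwL n)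
  exact ⟨hL_mem.toLp L, Lp.tendsto_of_ae_tendsto_of_dominated hL_mem
    (memLp_one_iff_integrable.1 hL_mem).norm.hasFiniteIntegral hf_le hL⟩

/-- If `E` is a KB-space, then so is `B(X, E, μ) = L¹(X, E, μ)`. -/
theorem stmt_8 {X : Type*} [MeasurableSpace X] (μ : Measure X) [IsFiniteMeasure μ]
    {E : Type*} [NormedAddCommGroup E] [Lattice E] [HasSolidNorm E] [IsOrderedAddMonoid E]
    [CompleteSpace E]
    (hE : KBSpace E) : KBSpace (Lp E 1 μ) :=
  stmt_8_general μ hE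
end

section
/- Let (X, Σ, μ) be a finite measure space with μ(X) > 0 and E a Banach lattice. If the dual Banach lattice B(X, E, μ)′ is order continuous, then E′ is order continuous. -/
open MeasureTheory Filter Topology

/-- The canonical (pointwise-on-positive-elements) order on the topological dual of a
Banach lattice: `f ≤ g` iff `f x ≤ g x` for all `x ≥ 0`. -/
def DualLe {G : Type*} [NormedAddCommGroup G] [Lattice G] [HasSolidNorm G] [IsOrderedAddMonoid G] [NormedSpace ℝ G]
    (f g : G →L[ℝ] ℝ) : Prop := ∀ x : G, 0 ≤ x → f x ≤ g x

/-- The dual Banach lattice of `G` is order continuous: every downward directed net of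
functionals with infimum `0` (in the dual order) converges to `0` in the dual norm. -/
def DualOrderCont (G : Type*) [NormedAddCommGroup G] [Lattice G] [HasSolidNorm G] [IsOrderedAddMonoid G] [NormedSpace ℝ G] : Prop :=
  ∀ (ι : Type) [Preorder ι] [IsDirected ι (· ≤ ·)] [Nonempty ι] (F : ι → G →L[ℝ] ℝ),
    (∀ i j, i ≤ j → DualLe (F j) (F i)) →
    (∀ i, DualLe 0 (F i)) →
    (∀ c : G →L[ℝ] ℝ, (∀ i, DualLe c (F i)) → DualLe c 0) →
    Tendsto (fun i => ‖F i‖) atTop (𝓝 0)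

/-!
Let `F i ↓ 0` in `E′`. The functionals `f ↦ ∫ F i (f x) dμ` on `L¹(μ, E)` again decrease, and
testing them on constant functions shows that their norms dominate `‖F i‖`; so it suffices that
their infimum is `0`. A decreasing net of positive functionals converges pointwise to a continuous
functional, which here must vanish on the positive cone, so `F i e → 0` for every `e ≥ 0`. A lower
bound `c` of the lifted net is then `≤ μ(X) • F i e → 0` at every truncation `f ⊓ e`, and these
truncations approximate each positive `f ∈ L¹`, because a simple function is bounded above by a
constant.
-/

section DualOrder

variable {G : Type*} [NormedAddCommGroup G] [Lattice G] [HasSolidNorm G] [IsOrderedAddMonoid G]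
  [NormedSpace ℝ G]

structure DualDecreasesToZero {ι : Type*} [Preorder ι] (F : ι → G →L[ℝ] ℝ) : Prop where
  antitone : ∀ i j, i ≤ j → DualLe (F j) (F i)
  nonneg : ∀ i, DualLe 0 (F i)
  le_zero_of_lowerBound : ∀ c : G →L[ℝ] ℝ, (∀ i, DualLe c (F i)) → DualLe c 0

theorem DualLe.monotone {f : G →L[ℝ] ℝ} (hf : DualLe 0 f) : Monotone f := fun a b hab => by
  simpa using hf (b - a) (sub_nonneg.2 hab)

theorem DualLe.abs_apply_le {f : G →L[ℝ] ℝ} (hf : DualLe 0 f) (x : G) : |f x| ≤ f |x| := by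
  have hpos : 0 ≤ f x⁺ := by simpa using hf _ (posPart_nonneg x)
  have hneg : 0 ≤ f x⁻ := by simpa using hf _ (negPart_nonneg x)
  calc |f x| = |f x⁺ - f x⁻| := by rw [← map_sub, posPart_sub_negPart]
    _ ≤ f x⁺ + f x⁻ := abs_sub_le_iff.2 ⟨by linarith, by linarith⟩
    _ = f |x| := by rw [← map_add, posPart_add_negPart]

variable {ι : Type*} [Preorder ι] {F : ι → G →L[ℝ] ℝ}

theorem tendsto_apply_iInf_of_nonneg (hanti : ∀ i j, i ≤ j → DualLe (F j) (F i))
    (hpos : ∀ i, DualLe 0 (F i)) {x : G} (hx : 0 ≤ x) :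
    Tendsto (fun i => F i x) atTop (𝓝 (⨅ i, F i x)) :=
  tendsto_atTop_ciInf (fun i j hij => hanti i j hij x hx)
    ⟨0, by rintro _ ⟨i, rfl⟩; simpa using hpos i x hx⟩

theorem exists_tendsto_apply [IsDirected ι (· ≤ ·)] [Nonempty ι]
    (hanti : ∀ i j, i ≤ j → DualLe (F j) (F i)) (hpos : ∀ i, DualLe 0 (F i)) :
    ∃ Φ : G →L[ℝ] ℝ, ∀ x, Tendsto (fun i => F i x) atTop (𝓝 (Φ x)) := by
  set φ : G → ℝ := fun x => (⨅ i, F i x⁺) - ⨅ i, F i x⁻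
  have hφ : Tendsto (fun i x => F i x) atTop (𝓝 φ) := tendsto_pi_nhds.2 fun x => by
    simpa only [← map_sub, posPart_sub_negPart] using
      (tendsto_apply_iInf_of_nonneg hanti hpos (posPart_nonneg x)).sub
        (tendsto_apply_iInf_of_nonneg hanti hpos (negPart_nonneg x))
  obtain ⟨i₀⟩ := ‹Nonempty ι›
  have hbound : ∀ x, ‖φ x‖ ≤ ‖F i₀‖ * ‖x‖ := fun x =>
    le_of_tendsto ((continuous_norm.tendsto _).comp (tendsto_pi_nhds.1 hφ x)) <|
      eventually_atTop.2 ⟨i₀, fun i hi => calc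
        ‖F i x‖ ≤ F i |x| := (hpos i).abs_apply_le x
        _ ≤ F i₀ |x| := hanti i₀ i hi _ (abs_nonneg x)
        _ ≤ ‖F i₀‖ * ‖x‖ := by
          simpa only [norm_abs_eq_norm] using (le_abs_self _).trans ((F i₀).le_opNorm |x|)⟩
  exact ⟨(linearMapOfTendsto φ (fun i => (F i : G →ₗ[ℝ] ℝ)) hφ).mkContinuous _ hbound,
    fun x => tendsto_pi_nhds.1 hφ x⟩

theorem DualDecreasesToZero.tendsto_apply [IsDirected ι (· ≤ ·)] [Nonempty ι]
    (hF : DualDecreasesToZero F) {x : G} (hx : 0 ≤ x) :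
    Tendsto (fun i => F i x) atTop (𝓝 0) := by
  obtain ⟨Φ, hΦ⟩ := exists_tendsto_apply hF.antitone hF.nonneg
  have hΦle : ∀ i, DualLe Φ (F i) := fun i y hy =>
    le_of_tendsto (hΦ y) (eventually_atTop.2 ⟨i, fun j hj => hF.antitone i j hj y hy⟩)
  have hΦx : Φ x = 0 := le_antisymm (by simpa using hF.le_zero_of_lowerBound Φ hΦle x hx)
    (ge_of_tendsto' (hΦ x) fun i => by simpa using hF.nonneg i x hx)
  simpa [hΦx] using hΦ x

end DualOrder

section Lp

variable {X : Type*} [MeasurableSpace X] (μ : Measure X) {E : Type*} [NormedAddCommGroup E]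

theorem Lp.exists_norm_sub_inf_const_lt [Lattice E] [HasSolidNorm E] [IsOrderedAddMonoid E]
    [IsFiniteMeasure μ] {p : ENNReal} [Fact (1 ≤ p)]
    (hp : p ≠ ⊤) (f : Lp E p μ) {ε : ℝ} (hε : 0 < ε) :
    ∃ e : E, 0 ≤ e ∧ ‖f - f ⊓ Lp.const p μ e‖ < ε := by
  obtain ⟨s, hfs, hs⟩ := (Lp.memLp f).exists_simpleFunc_eLpNorm_sub_lt hp
    (ENNReal.ofReal_pos.2 hε).ne'
  refine ⟨∑ a ∈ s.range, a⁺, Finset.sum_nonneg fun a _ => posPart_nonneg a, ?_⟩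
  set k := Lp.const p μ (∑ a ∈ s.range, a⁺)
  have hsk : hs.toLp s ≤ k := by
    refine (Lp.coeFn_le _ _).1 ?_
    filter_upwards [hs.coeFn_toLp, Lp.coeFn_const p μ (∑ a ∈ s.range, a⁺)] with x hsx hkx
    rw [hsx, hkx]
    exact (le_posPart _).trans
      (Finset.single_le_sum (fun a _ => posPart_nonneg a) (s.mem_range_self x))
  calc ‖f - f ⊓ k‖ ≤ ‖f - hs.toLp s‖ := by
        refine norm_le_norm_of_abs_le_abs ?_
        rw [abs_of_nonneg (sub_nonneg.2 inf_le_left), sub_inf, sub_self]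
        exact sup_le (abs_nonneg _) ((sub_le_sub_left hsk f).trans (le_abs_self _))
    _ = ‖((Lp.memLp f).sub hs).toLp (⇑f - ⇑s)‖ := by
        rw [MemLp.toLp_sub (Lp.memLp f) hs, Lp.toLp_coeFn]
    _ < ε := by rw [Lp.norm_toLp]; exact ENNReal.toReal_lt_of_lt_ofReal hfs

variable [NormedSpace ℝ E]

noncomputable def integralComp (F : E →L[ℝ] ℝ) : Lp E 1 μ →L[ℝ] ℝ :=
  L1.integralCLM.comp (F.compLpL 1 μ)

theorem integralComp_apply (F : E →L[ℝ] ℝ) (f : Lp E 1 μ) :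
    integralComp μ F f = ∫ x, F (f x) ∂μ := by
  change L1.integralCLM (F.compLp f) = _
  rw [← L1.integral_eq, L1.integral_eq_integral]
  exact integral_congr_ae (F.coeFn_compLp f)

theorem integralComp_zero : integralComp μ (0 : E →L[ℝ] ℝ) = 0 := by
  ext f
  simp [integralComp_apply]

theorem integralComp_const [IsFiniteMeasure μ] (F : E →L[ℝ] ℝ) (e : E) :
    integralComp μ F (Lp.const 1 μ e) = μ.real Set.univ * F e := by
  rw [integralComp_apply, ← smul_eq_mul, ← integral_const]
  refine integral_congr_ae ?_
  filter_upwards [Lp.coeFn_const 1 μ e] with x hx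
  rw [hx]
  rfl

theorem norm_le_norm_integralComp [IsFiniteMeasure μ] (hμ : μ Set.univ ≠ 0) (F : E →L[ℝ] ℝ) :
    ‖F‖ ≤ ‖integralComp μ F‖ := by
  have hm : 0 < μ.real Set.univ := ENNReal.toReal_pos hμ (measure_ne_top μ _)
  refine F.opNorm_le_bound (norm_nonneg _) fun e => le_of_mul_le_mul_left ?_ hm
  calc μ.real Set.univ * ‖F e‖ = ‖integralComp μ F (Lp.const 1 μ e)‖ := by
        rw [integralComp_const, norm_mul, Real.norm_of_nonneg hm.le]
    _ ≤ ‖integralComp μ F‖ * ‖Lp.const 1 μ e‖ := (integralComp μ F).le_opNorm _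
    _ = μ.real Set.univ * (‖integralComp μ F‖ * ‖e‖) := by
        rw [Lp.norm_const' 1 μ e one_ne_zero ENNReal.one_ne_top]
        simp only [ENNReal.toReal_one, div_one, Real.rpow_one]
        ring

variable [Lattice E] [HasSolidNorm E] [IsOrderedAddMonoid E]

theorem dualLe_integralComp {F F' : E →L[ℝ] ℝ} (h : DualLe F F') :
    DualLe (integralComp μ F) (integralComp μ F') := fun f hf => by
  rw [integralComp_apply, integralComp_apply]
  refine integral_mono_ae (F.integrable_comp (L1.integrable_coeFn f))
    (F'.integrable_comp (L1.integrable_coeFn f)) ?_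
  filter_upwards [(Lp.coeFn_nonneg f).2 hf] with x hx
  exact h _ hx

theorem DualDecreasesToZero.map_integralComp [IsFiniteMeasure μ] {ι : Type*} [Preorder ι]
    [IsDirected ι (· ≤ ·)] [Nonempty ι] {F : ι → E →L[ℝ] ℝ} (hF : DualDecreasesToZero F) :
    DualDecreasesToZero fun i => integralComp μ (F i) := by
  have hnonneg : ∀ i, DualLe 0 (integralComp μ (F i)) := fun i => by
    simpa only [integralComp_zero] using dualLe_integralComp μ (hF.nonneg i)
  refine ⟨fun i j hij => dualLe_integralComp μ (hF.antitone i j hij), hnonneg, ?_⟩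
  intro c hc f hf
  have hc_inf_const : ∀ e : E, 0 ≤ e → c (f ⊓ Lp.const 1 μ e) ≤ 0 := fun e he => by
    have hk : 0 ≤ Lp.const 1 μ e := (Lp.coeFn_nonneg _).1 <| by
      filter_upwards [Lp.coeFn_const 1 μ e] with x hx
      rw [hx]
      exact he
    refine ge_of_tendsto' (by simpa using (hF.tendsto_apply he).const_mul (μ.real Set.univ))
      fun i => ?_
    calc c (f ⊓ Lp.const 1 μ e) ≤ integralComp μ (F i) (f ⊓ Lp.const 1 μ e) :=
          hc i _ (le_inf hf hk)
      _ ≤ integralComp μ (F i) (Lp.const 1 μ e) := (hnonneg i).monotone inf_le_right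
      _ = μ.real Set.univ * F i e := integralComp_const μ (F i) e
  have hf_mem : f ∈ closure {g | c g ≤ 0} := Metric.mem_closure_iff.2 fun ε hε => by
    obtain ⟨e, he, hlt⟩ := Lp.exists_norm_sub_inf_const_lt μ ENNReal.one_ne_top f hε
    exact ⟨_, hc_inf_const e he, by rwa [dist_eq_norm]⟩
  rw [(isClosed_le c.continuous continuous_const).closure_eq] at hf_mem
  simpa using hf_mem

end Lp

/-- If `μ(X) > 0` and the dual of `B(X, E, μ)` is order continuous, then the
dual of `E` is order continuous. -/
theorem stmt_12 {X : Type*} [MeasurableSpace X] (μ : Measure X) [IsFiniteMeasure μ]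
    (hμ : 0 < μ Set.univ) {E : Type*} [NormedAddCommGroup E] [Lattice E] [HasSolidNorm E] [IsOrderedAddMonoid E] [NormedSpace ℝ E]
    (hB : DualOrderCont (Lp E 1 μ)) : DualOrderCont E := by
  intro ι _ _ _ F hanti hpos hinf
  have hG := DualDecreasesToZero.map_integralComp μ ⟨hanti, hpos, hinf⟩
  exact squeeze_zero (fun _ => norm_nonneg _)
    (fun i => norm_le_norm_integralComp μ hμ.ne' (F i))
    (hB ι _ hG.antitone hG.nonneg hG.le_zero_of_lowerBound)
end
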